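/- Let f: ℝ × ℝ^d → ℝ be a bounded function such that f(x₂,y₂)(x₂−x₁) ≥ f(x₁,y₁)(x₂−x₁) for all (x₁,y₁),(x₂,y₂). Then there exists a non-decreasing function g: ℝ → ℝ and an at most countable set S ⊆ ℝ such that f(x,y) = g(x) for all x ∉ S and all y ∈ ℝ^d. -/
import Mathlib


/-- A bounded function `f : ℝ × ℝ^d → ℝ` satisfying the weak monotonicity
(single-crossing) condition agrees, off a countable set, with a
non-decreasing function of the first coordinate. -/
theorem stmt_0 (d : ℕ) (f : ℝ × (Fin d → ℝ) → ℝ)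
    (hbound : ∃ M : ℝ, ∀ p, |f p| ≤ M)
    (hmono : ∀ (x₁ x₂ : ℝ) (y₁ y₂ : Fin d → ℝ),
      f (x₁, y₁) * (x₂ - x₁) ≤ f (x₂, y₂) * (x₂ - x₁)) :
    ∃ (g : ℝ → ℝ) (S : Set ℝ), Monotone g ∧ S.Countable ∧
      ∀ x ∉ S, ∀ y : Fin d → ℝ, f (x, y) = g x := by
  obtain ⟨M, hM⟩ := hbound
  -- key: strict monotonicity across x
  have key : ∀ x₁ x₂ : ℝ, x₁ < x₂ → ∀ y₁ y₂, f (x₁, y₁) ≤ f (x₂, y₂) := by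
    intro x₁ x₂ hx y₁ y₂
    have := hmono x₁ x₂ y₁ y₂
    have hpos : (0:ℝ) < x₂ - x₁ := by linarith
    exact le_of_mul_le_mul_right this hpos
  set l : ℝ → ℝ := fun x => ⨅ y : Fin d → ℝ, f (x, y) with hl
  set h : ℝ → ℝ := fun x => ⨆ y : Fin d → ℝ, f (x, y) with hh
  have hbb : ∀ x : ℝ, BddBelow (Set.range fun y : Fin d → ℝ => f (x, y)) := by
    intro x
    exact ⟨-M, by rintro _ ⟨y, rfl⟩; have := hM (x, y); exact neg_le_of_abs_le this⟩
  have hba : ∀ x : ℝ, BddAbove (Set.range fun y : Fin d → ℝ => f (x, y)) := by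
    intro x
    exact ⟨M, by rintro _ ⟨y, rfl⟩; have := hM (x, y); exact le_of_abs_le this⟩
  have hlf : ∀ x y, l x ≤ f (x, y) := fun x y => ciInf_le (hbb x) y
  have hfh : ∀ x y, f (x, y) ≤ h x := fun x y => le_ciSup (hba x) y
  have hlh : ∀ x, l x ≤ h x := fun x => le_trans (hlf x 0) (hfh x 0)
  have hhl : ∀ x₁ x₂ : ℝ, x₁ < x₂ → h x₁ ≤ l x₂ := by
    intro x₁ x₂ hx
    apply ciSup_le
    intro y
    exact le_ciInf fun y' => key x₁ x₂ hx y y'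
  have hmonol : Monotone l := by
    intro a b hab
    rcases eq_or_lt_of_le hab with rfl | hab
    · exact le_rfl
    · exact le_trans (le_trans (hlf a 0) (hfh a 0)) (hhl a b hab)
  set S : Set ℝ := {x | l x < h x} with hS
  have hScount : S.Countable := by
    apply Set.countable_coe_iff.mp
    have hq : ∀ x : S, ∃ q : ℚ, l x.1 < (q:ℝ) ∧ (q:ℝ) < h x.1 := fun x =>
      exists_rat_btwn x.2
    choose F hF1 hF2 using hq
    have hinj : Function.Injective F := by
      intro a b hab
      by_contra hne
      have hne' : a.1 ≠ b.1 := fun hh => hne (Subtype.ext hh)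
      rcases lt_or_gt_of_ne hne' with hlt | hlt
      · have : (F a : ℝ) < F b :=
          lt_of_lt_of_le (hF2 a) (le_trans (hhl _ _ hlt) (le_of_lt (hF1 b)))
        rw [hab] at this; exact lt_irrefl _ this
      · have : (F b : ℝ) < F a :=
          lt_of_lt_of_le (hF2 b) (le_trans (hhl _ _ hlt) (le_of_lt (hF1 a)))
        rw [hab] at this; exact lt_irrefl _ this
    exact hinj.countable
  refine ⟨l, S, hmonol, hScount, ?_⟩
  intro x hx y
  have heq : l x = h x := le_antisymm (hlh x) (not_lt.mp hx)
  have h1 := hlf x y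
  have h2 := hfh x y
  linarith
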